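/- Let $a : \mathbb{R} \to \mathbb{R}$ be Lipschitz with constant $C_a$ and let $x_1, x_2 : [0,1] \to \mathbb{R}$ be continuous functions satisfying $x_k(t) = u_k + \int_0^t a(x_k(s))\,ds + w_k(t)$ for continuous paths $w_1, w_2$ with $w_k(0)=0$. Let $\eta(t) = e^{C_a t}(u_2 - u_1) + e^{C_a t}\int_0^t e^{-C_a s}\, d(w_2 - w_1)(s)$, assume $u_2 \geq u_1$, and let $\theta = \inf\{s \in [0,1] : x_1(s) = x_2(s)\} \wedge 1$. Then for all $t \in [0, \theta]$, $\eta(t) \geq x_2(t) - x_1(t)$. -/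

import Mathlib

/-!
Both `x₂ - x₁` and `η` solve integral equations driven by the same noise `w₂ - w₁`:
`η` the linear one `η t = (u₂ - u₁) + ∫₀ᵗ C_a η + (w₂ - w₁) t` (variation of constants), and
`x₂ - x₁` the one with drift `a ∘ x₂ - a ∘ x₁`. Before the meeting time `x₂ - x₁ ≥ 0`, so the
Lipschitz bound gives `a ∘ x₂ - a ∘ x₁ ≤ C_a (x₂ - x₁)`, and the gap `h = η - (x₂ - x₁)` satisfies
`h t ≥ C_a ∫₀ᵗ h`. Then `e^{-C_a t} ∫₀ᵗ h` is nondecreasing from `0`, whence `h ≥ 0`.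
-/

open MeasureTheory intervalIntegral Set

/-- `e^{ct} u + e^{ct} ∫₀ᵗ e^{-cs} dW(s)`, with the Stieltjes integral integrated by parts
(assuming `W 0 = 0`). -/
noncomputable def linearSolution (c u : ℝ) (W : ℝ → ℝ) (t : ℝ) : ℝ :=
  Real.exp (c * t) * u
    + Real.exp (c * t) * (Real.exp (-c * t) * W t + c * ∫ s in (0:ℝ)..t, Real.exp (-c * s) * W s)

lemma linearSolution_sub_eq (c u : ℝ) (W : ℝ → ℝ) (t : ℝ) :
    linearSolution c u W t - W t = Real.exp (c * t) * u
      + c * (Real.exp (c * t) * ∫ s in (0:ℝ)..t, Real.exp (-c * s) * W s) := by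
  have hexp : Real.exp (c * t) * Real.exp (-c * t) = 1 := by
    rw [← Real.exp_add, show c * t + -c * t = 0 by ring, Real.exp_zero]
  unfold linearSolution
  linear_combination W t * hexp

section linearSolution

variable {c u : ℝ} {W : ℝ → ℝ}

lemma hasDerivAt_linearSolution_sub (hW : Continuous W) (t : ℝ) :
    HasDerivAt (fun t => linearSolution c u W t - W t) (c * linearSolution c u W t) t := by
  have hexp : HasDerivAt (fun t => Real.exp (c * t)) (Real.exp (c * t) * c) t :=
    ((hasDerivAt_id t).const_mul c).exp.congr_deriv (by simp)
  have hF : HasDerivAt (fun t => ∫ s in (0:ℝ)..t, Real.exp (-c * s) * W s)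
      (Real.exp (-c * t) * W t) t :=
    ((by fun_prop : Continuous fun s => Real.exp (-c * s)).mul hW).integral_hasStrictDerivAt 0 t
      |>.hasDerivAt
  rw [funext (linearSolution_sub_eq c u W)]
  refine ((hexp.mul_const u).add ((hexp.mul hF).const_mul c)).congr_deriv ?_
  unfold linearSolution
  ring

lemma continuous_linearSolution (hW : Continuous W) : Continuous (linearSolution c u W) := by
  have := continuous_iff_continuousAt.2 fun t =>
    (hasDerivAt_linearSolution_sub (c := c) (u := u) hW t).continuousAt
  convert this.add hW using 1
  ext t
  simp

lemma linearSolution_eq_integral (hW : Continuous W) (t : ℝ) :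
    linearSolution c u W t = u + (∫ s in (0:ℝ)..t, c * linearSolution c u W s) + W t := by
  rw [integral_eq_sub_of_hasDerivAt (fun s _ => hasDerivAt_linearSolution_sub hW s)
    ((continuous_const.mul (continuous_linearSolution hW)).intervalIntegrable _ _),
    linearSolution_sub_eq c u W 0]
  simp

end linearSolution

lemma nonneg_of_const_mul_integral_le {h : ℝ → ℝ} {c T : ℝ} (hc : 0 ≤ c) (hh : Continuous h)
    (hle : ∀ t ∈ Icc 0 T, c * (∫ s in (0:ℝ)..t, h s) ≤ h t) : ∀ t ∈ Icc 0 T, 0 ≤ h t := by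
  set H := fun t => ∫ s in (0:ℝ)..t, h s
  have hH : ∀ t, HasDerivAt H (h t) t := fun t => (hh.integral_hasStrictDerivAt 0 t).hasDerivAt
  have hG : ∀ t, HasDerivAt (fun t => Real.exp (-c * t) * H t)
      (Real.exp (-c * t) * (h t - c * H t)) t := fun t =>
    ((((hasDerivAt_id t).const_mul (-c)).exp).mul (hH t)).congr_deriv (by simp; ring)
  have hmono : MonotoneOn (fun t => Real.exp (-c * t) * H t) (Icc 0 T) :=
    monotoneOn_of_hasDerivWithinAt_nonneg (convex_Icc 0 T)
      (HasDerivAt.continuousOn fun t _ => hG t) (fun t _ => (hG t).hasDerivWithinAt)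
      fun t ht => mul_nonneg (Real.exp_pos _).le (sub_nonneg.2 (hle t (interior_subset ht)))
  intro t ht
  have hHt : 0 ≤ H t := by
    have := hmono ⟨le_rfl, ht.1.trans ht.2⟩ ht ht.1
    simp only [mul_zero, H, integral_same] at this
    exact (mul_nonneg_iff_of_pos_left (Real.exp_pos _)).1 this
  exact (mul_nonneg hc hHt).trans (hle t ht)

lemma nonneg_of_ne_zero_on_Ico {f : ℝ → ℝ} {t : ℝ} (ht : 0 ≤ t) (hf : ContinuousOn f (Icc 0 t))
    (h0 : 0 ≤ f 0) (hzero : ∀ s ∈ Ico 0 t, f s ≠ 0) : 0 ≤ f t := by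
  by_contra! hneg
  obtain ⟨r, hr, hfr⟩ := intermediate_value_Icc' ht hf ⟨hneg.le, h0⟩
  rcases hr.2.lt_or_eq with hrt | rfl
  · exact hzero r ⟨hr.1, hrt⟩ hfr
  · exact hneg.ne hfr

lemma le_linearSolution {c u T : ℝ} {W D g : ℝ → ℝ} (hc : 0 ≤ c) (hW : Continuous W)
    (hD : Continuous D) (hg : Continuous g)
    (hDeq : ∀ t ∈ Icc 0 T, D t = u + (∫ s in (0:ℝ)..t, g s) + W t)
    (hgD : ∀ s ∈ Icc 0 T, g s ≤ c * D s) :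
    ∀ t ∈ Icc 0 T, D t ≤ linearSolution c u W t := by
  have hsol := continuous_linearSolution (c := c) (u := u) hW
  have hgap : ∀ t ∈ Icc 0 T,
      linearSolution c u W t - D t = ∫ s in (0:ℝ)..t, (c * linearSolution c u W s - g s) := by
    intro t ht
    have hi : IntervalIntegrable (fun s => c * linearSolution c u W s) volume 0 t :=
      (continuous_const.mul hsol).intervalIntegrable _ _
    rw [linearSolution_eq_integral hW, hDeq t ht, integral_sub hi (hg.intervalIntegrable _ _)]
    ring
  intro t ht
  refine sub_nonneg.1 (nonneg_of_const_mul_integral_le (h := fun t => linearSolution c u W t - D t)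
    hc (hsol.sub hD) (fun t ht => ?_) t ht)
  rw [hgap t ht, ← intervalIntegral.integral_const_mul]
  refine integral_mono_on ht.1 ((continuous_const.mul (hsol.sub hD)).intervalIntegrable _ _)
    (((continuous_const.mul hsol).sub hg).intervalIntegrable _ _) fun s hs => ?_
  have := hgD s ⟨hs.1, hs.2.trans ht.2⟩
  linarith [mul_sub c (linearSolution c u W s) (D s)]

theorem stmt1_general (a : ℝ → ℝ) (Ca : ℝ)
    (hLip : ∀ x y, |a x - a y| ≤ Ca * |x - y|)
    (u₁ u₂ : ℝ) (hu : u₁ ≤ u₂)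
    (w₁ w₂ x₁ x₂ : ℝ → ℝ)
    (hw₁ : Continuous w₁) (hw₂ : Continuous w₂)
    (hw₁0 : w₁ 0 = 0) (hw₂0 : w₂ 0 = 0)
    (hx₁c : Continuous x₁) (hx₂c : Continuous x₂)
    (hx₁ : ∀ t ∈ Icc (0:ℝ) 1, x₁ t = u₁ + (∫ s in (0:ℝ)..t, a (x₁ s)) + w₁ t)
    (hx₂ : ∀ t ∈ Icc (0:ℝ) 1, x₂ t = u₂ + (∫ s in (0:ℝ)..t, a (x₂ s)) + w₂ t)
    (η : ℝ → ℝ)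
    (hη : ∀ t, η t = Real.exp (Ca * t) * (u₂ - u₁)
        + Real.exp (Ca * t) *
          (Real.exp (-Ca * t) * (w₂ t - w₁ t)
            + Ca * ∫ s in (0:ℝ)..t, Real.exp (-Ca * s) * (w₂ s - w₁ s)))
    (θ : ℝ)
    (hθ : θ = sInf ({s : ℝ | s ∈ Icc (0:ℝ) 1 ∧ x₁ s = x₂ s} ∪ {1})) :
    ∀ t ∈ Icc (0:ℝ) θ, x₂ t - x₁ t ≤ η t := by
  obtain rfl : η = linearSolution Ca (u₂ - u₁) (fun t => w₂ t - w₁ t) := funext hη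
  have hCa : 0 ≤ Ca := by simpa using (abs_nonneg _).trans (hLip 1 0)
  have ha : Continuous a :=
    (LipschitzWith.of_dist_le' fun x y => by simpa only [Real.dist_eq] using hLip x y).continuous
  have hax₁ : Continuous fun s => a (x₁ s) := ha.comp hx₁c
  have hax₂ : Continuous fun s => a (x₂ s) := ha.comp hx₂c
  have hbdd : BddBelow ({s : ℝ | s ∈ Icc (0:ℝ) 1 ∧ x₁ s = x₂ s} ∪ {1}) :=
    bddBelow_Icc.mono (union_subset (fun s hs => hs.1) (by simp))
  have hθ1 : Icc 0 θ ⊆ Icc (0:ℝ) 1 := Icc_subset_Icc_right (hθ ▸ csInf_le hbdd (Or.inr rfl))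
  have hgap : ∀ s ∈ Icc 0 θ, 0 ≤ x₂ s - x₁ s := by
    refine fun s hs => nonneg_of_ne_zero_on_Ico (f := fun s => x₂ s - x₁ s) hs.1
      (hx₂c.sub hx₁c).continuousOn ?_ fun r hr hr0 => ?_
    · simp [hx₁ 0 (by simp), hx₂ 0 (by simp), hw₁0, hw₂0, hu]
    · have hθr : θ ≤ r := hθ ▸ csInf_le hbdd
        (Or.inl ⟨hθ1 ⟨hr.1, hr.2.le.trans hs.2⟩, by linarith⟩)
      exact hr.2.not_ge (hs.2.trans hθr)
  refine le_linearSolution (D := fun t => x₂ t - x₁ t) (g := fun s => a (x₂ s) - a (x₁ s))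
    hCa (hw₂.sub hw₁) (hx₂c.sub hx₁c) (hax₂.sub hax₁) (fun t ht => ?_) fun s hs => ?_
  · rw [hx₁ t (hθ1 ht), hx₂ t (hθ1 ht),
      integral_sub (hax₂.intervalIntegrable _ _) (hax₁.intervalIntegrable _ _)]
    ring
  · calc a (x₂ s) - a (x₁ s) ≤ |a (x₂ s) - a (x₁ s)| := le_abs_self _
      _ ≤ Ca * (x₂ s - x₁ s) := by
        simpa [abs_of_nonneg (hgap s hs)] using hLip (x₂ s) (x₁ s)

/-- pathwise comparison inequality (Lemma 2.2 of the paper).  The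
Riemann–Stieltjes integral `∫_0^t e^{-Ca s} d(w₂-w₁)(s)` is evaluated by its
integration-by-parts representation. -/
theorem stmt1 (a : ℝ → ℝ) (Ca : ℝ) (hCa : 0 ≤ Ca)
    (hLip : ∀ x y, |a x - a y| ≤ Ca * |x - y|)
    (u₁ u₂ : ℝ) (hu : u₁ ≤ u₂)
    (w₁ w₂ x₁ x₂ : ℝ → ℝ)
    (hw₁ : Continuous w₁) (hw₂ : Continuous w₂)
    (hw₁0 : w₁ 0 = 0) (hw₂0 : w₂ 0 = 0)
    (hx₁c : Continuous x₁) (hx₂c : Continuous x₂)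
    (hx₁ : ∀ t ∈ Icc (0:ℝ) 1, x₁ t = u₁ + (∫ s in (0:ℝ)..t, a (x₁ s)) + w₁ t)
    (hx₂ : ∀ t ∈ Icc (0:ℝ) 1, x₂ t = u₂ + (∫ s in (0:ℝ)..t, a (x₂ s)) + w₂ t)
    (η : ℝ → ℝ)
    (hη : ∀ t, η t = Real.exp (Ca * t) * (u₂ - u₁)
        + Real.exp (Ca * t) *
          (Real.exp (-Ca * t) * (w₂ t - w₁ t)
            + Ca * ∫ s in (0:ℝ)..t, Real.exp (-Ca * s) * (w₂ s - w₁ s)))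
    (θ : ℝ)
    (hθ : θ = sInf ({s : ℝ | s ∈ Icc (0:ℝ) 1 ∧ x₁ s = x₂ s} ∪ {1})) :
    ∀ t ∈ Icc (0:ℝ) θ, x₂ t - x₁ t ≤ η t :=
  stmt1_general a Ca hLip u₁ u₂ hu w₁ w₂ x₁ x₂ hw₁ hw₂ hw₁0 hw₂0 hx₁c hx₂c hx₁ hx₂ η hη θ hθ
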